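/- arXiv:1612.09000 — 7 statements merged into one kernel-verified Lean document; each statement's English description precedes it below -/
import Mathlib

section
/- If G is a compact group with normalized Haar measure μ, h : G → ℂ is a continuous positive definite function with α = ∫ h dμ, and α₀ ≤ α is a real number, then the function h − α₀ is also positive definite; equivalently, for all u₁,...,u_m ∈ G and c₁,...,c_m ∈ ℂ, ∑_{i,j} h(u_i⁻¹ u_j) conj(c_i) c_j ≥ α₀ |∑_i c_i|². -/
/-!
Test positive definiteness of `h` at the `2m` points `u_i, x u_i` with coefficients `c, -c`:
both diagonal blocks give the form `A = ∑ conj(c_i) c_j h(u_i⁻¹ u_j)`, the off-diagonal ones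
give the same form with `x` or `x⁻¹` inserted in the middle. Averaging over `x` against the
Haar measure, which on a compact group is invariant under left and right translation and under
inversion, turns each off-diagonal block into `(∫ h) |∑ c_i|²`. Hence `(∫ h) |∑ c_i|² ≤ A`,
and `α₀ ≤ ∫ h` finishes.
-/

open MeasureTheory
open scoped ComplexOrder

def IsPosDef {G : Type*} [Group G] (h : G → ℂ) : Prop :=
  ∀ (m : ℕ) (u : Fin m → G) (c : Fin m → ℂ),
    0 ≤ ∑ i, ∑ j, (starRingEnd ℂ) (c i) * c j * h ((u i)⁻¹ * u j)

open ComplexConjugate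

section Kernel

variable {G : Type*} [Group G] {m : ℕ}

def kernelForm (h : G → ℂ) (u v : Fin m → G) (c : Fin m → ℂ) : ℂ :=
  ∑ i, ∑ j, conj (c i) * c j * h ((u i)⁻¹ * v j)

theorem kernelForm_sub_const (h : G → ℂ) (a : ℂ) (u v : Fin m → G) (c : Fin m → ℂ) :
    kernelForm (fun g => h g - a) u v c = kernelForm h u v c - a * ‖∑ i, c i‖ ^ 2 := by
  simp only [kernelForm, mul_sub, Finset.sum_sub_distrib, ← Finset.sum_mul, ← Finset.mul_sum,
    ← map_sum, Complex.conj_mul']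
  ring

theorem IsPosDef.kernelForm_translate_add_le {h : G → ℂ} (hpd : IsPosDef h) (u : Fin m → G)
    (c : Fin m → ℂ) (x : G) :
    kernelForm h u (fun j => x * u j) c + kernelForm h (fun i => x * u i) u c ≤
      2 * kernelForm h u u c := by
  have key := hpd (m + m) (Fin.append u fun i => x * u i) (Fin.append c (-c))
  have hcancel (i j : Fin m) : (x * u i)⁻¹ * (x * u j) = (u i)⁻¹ * u j := by group
  simp only [Fin.sum_univ_add, Fin.append_left, Fin.append_right, Pi.neg_apply, map_neg,
    neg_mul, mul_neg, Finset.sum_neg_distrib, Finset.sum_add_distrib, hcancel] at key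
  rw [← sub_nonneg]
  convert key using 1
  simp only [kernelForm]
  ring

end Kernel

theorem integrable_double_sum_conj_mul {X : Type*} [MeasurableSpace X] {μ : Measure X} {m : ℕ}
    (f : Fin m → Fin m → X → ℂ) (hf : ∀ i j, Integrable (f i j) μ) (c : Fin m → ℂ) :
    Integrable (fun x => ∑ i, ∑ j, conj (c i) * c j * f i j x) μ :=
  integrable_finsetSum _ fun i _ => integrable_finsetSum _ fun j _ => (hf i j).const_mul _

theorem integral_double_sum_conj_mul {X : Type*} [MeasurableSpace X] {μ : Measure X} {m : ℕ}
    (f : Fin m → Fin m → X → ℂ) (hf : ∀ i j, Integrable (f i j) μ) {α : ℂ}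
    (hα : ∀ i j, ∫ x, f i j x ∂μ = α) (c : Fin m → ℂ) :
    ∫ x, ∑ i, ∑ j, conj (c i) * c j * f i j x ∂μ = α * ‖∑ i, c i‖ ^ 2 := by
  rw [integral_finsetSum _ fun i _ => integrable_finsetSum _ fun j _ => (hf i j).const_mul _]
  simp only [integral_finsetSum _ fun j _ => (hf _ j).const_mul _, integral_const_mul, hα,
    ← Finset.sum_mul, ← Finset.mul_sum, ← map_sum, Complex.conj_mul']
  ring

section Invariant

variable {G E : Type*} [Group G] [MeasurableSpace G] [MeasurableMul G]
  [NormedAddCommGroup E] [NormedSpace ℝ E] {μ : Measure G}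

theorem integral_comp_mul_mul [μ.IsMulLeftInvariant] [μ.IsMulRightInvariant] (f : G → E)
    (a b : G) : ∫ x, f (a * (x * b)) ∂μ = ∫ x, f x ∂μ :=
  (integral_mul_right_eq_self (fun y => f (a * y)) b).trans (integral_mul_left_eq_self f a)

theorem integral_comp_mul_inv_mul [MeasurableInv G] [μ.IsMulRightInvariant] [μ.IsInvInvariant]
    (f : G → E) (a b : G) : ∫ x, f ((x * a)⁻¹ * b) ∂μ = ∫ x, f x ∂μ :=
  calc ∫ x, f ((x * a)⁻¹ * b) ∂μ = ∫ x, f (x⁻¹ * b) ∂μ :=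
        integral_mul_right_eq_self (fun y => f (y⁻¹ * b)) a
    _ = ∫ x, f (x * b) ∂μ := integral_inv_eq_self (fun y => f (y * b)) μ
    _ = ∫ x, f x ∂μ := integral_mul_right_eq_self f b

end Invariant

section Haar

variable {G : Type*} [Group G] [TopologicalSpace G] [IsTopologicalGroup G] [LocallyCompactSpace G]
  [MeasurableSpace G] [BorelSpace G] (μ : Measure G) [μ.IsHaarMeasure] [IsProbabilityMeasure μ]

theorem isMulRightInvariant_of_isProbabilityMeasure : μ.IsMulRightInvariant :=
  ⟨fun g => by
    have : IsProbabilityMeasure (μ.map (· * g)) :=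
      Measure.isProbabilityMeasure_map (measurable_mul_const g).aemeasurable
    exact Measure.isHaarMeasure_eq_of_isProbabilityMeasure _ μ⟩

theorem isInvInvariant_of_isProbabilityMeasure : μ.IsInvInvariant := by
  have := isMulRightInvariant_of_isProbabilityMeasure μ
  have : μ.inv.IsHaarMeasure := {}
  have : IsProbabilityMeasure μ.inv := Measure.isProbabilityMeasure_map measurable_inv.aemeasurable
  exact ⟨Measure.isHaarMeasure_eq_of_isProbabilityMeasure _ μ⟩

end Haar

theorem IsPosDef.integral_mul_sq_norm_sum_le {G : Type*} [Group G] [MeasurableSpace G]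
    [MeasurableMul G] [MeasurableInv G] {μ : Measure G} [IsProbabilityMeasure μ]
    [μ.IsMulLeftInvariant] [μ.IsMulRightInvariant] [μ.IsInvInvariant] {h : G → ℂ}
    (hpd : IsPosDef h) (hint : Integrable h μ) {m : ℕ} (u : Fin m → G) (c : Fin m → ℂ) :
    (∫ g, h g ∂μ) * ‖∑ i, c i‖ ^ 2 ≤ kernelForm h u u c := by
  have hint₁ (i j : Fin m) : Integrable (fun x => h ((u i)⁻¹ * (x * u j))) μ :=
    (hint.comp_mul_left (u i)⁻¹).comp_mul_right (u j)
  have hint₂ (i j : Fin m) : Integrable (fun x => h ((x * u i)⁻¹ * u j)) μ :=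
    ((hint.comp_mul_right (u j)).comp_inv).comp_mul_right (u i)
  have hle : 2 * ((∫ g, h g ∂μ) * ‖∑ i, c i‖ ^ 2) ≤ 2 * kernelForm h u u c :=
    calc 2 * ((∫ g, h g ∂μ) * ‖∑ i, c i‖ ^ 2)
      _ = ∫ x, kernelForm h u (fun j => x * u j) c + kernelForm h (fun i => x * u i) u c ∂μ := by
          simp only [kernelForm]
          rw [integral_add (integrable_double_sum_conj_mul _ hint₁ c)
            (integrable_double_sum_conj_mul _ hint₂ c),
            integral_double_sum_conj_mul _ hint₁ (fun i j => integral_comp_mul_mul h _ _) c,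
            integral_double_sum_conj_mul _ hint₂ (fun i j => integral_comp_mul_inv_mul h _ _) c]
          ring
      _ ≤ ∫ _, 2 * kernelForm h u u c ∂μ :=
          integral_mono ((integrable_double_sum_conj_mul _ hint₁ c).add
            (integrable_double_sum_conj_mul _ hint₂ c)) (integrable_const _)
            (hpd.kernelForm_translate_add_le u c)
      _ = 2 * kernelForm h u u c := by simp
  exact le_of_mul_le_mul_left hle two_pos

/-- If `G` is a compact group with normalized Haar measure `μ`, `h : G → ℂ` is a
continuous positive definite function with `α = ∫ h dμ`, and `α₀ ≤ α` is a real number,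
then `h − α₀` is also positive definite; equivalently, for all `u₁,…,u_m ∈ G` and
`c₁,…,c_m ∈ ℂ`, `∑_{i,j} h(u_i⁻¹ u_j) conj(c_i) c_j ≥ α₀ |∑_i c_i|²`. -/
theorem posDef_sub_const {G : Type*} [Group G] [TopologicalSpace G]
    [IsTopologicalGroup G] [CompactSpace G] [MeasurableSpace G] [BorelSpace G]
    (μ : Measure G) [μ.IsHaarMeasure] [IsProbabilityMeasure μ]
    (h : G → ℂ) (hcont : Continuous h) (hpd : IsPosDef h)
    (α₀ : ℝ) (hα₀ : (α₀ : ℂ) ≤ ∫ x, h x ∂μ) :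
    IsPosDef (fun x => h x - α₀) ∧
      ∀ (m : ℕ) (u : Fin m → G) (c : Fin m → ℂ),
        (α₀ * ‖∑ i, c i‖ ^ 2 : ℂ) ≤
          ∑ i, ∑ j, (starRingEnd ℂ) (c i) * c j * h ((u i)⁻¹ * u j) := by
  have := isMulRightInvariant_of_isProbabilityMeasure μ
  have := isInvInvariant_of_isProbabilityMeasure μ
  have hint : Integrable h μ := hcont.integrable_of_hasCompactSupport (.of_compactSpace h)
  have hle (m : ℕ) (u : Fin m → G) (c : Fin m → ℂ) :
      (α₀ * ‖∑ i, c i‖ ^ 2 : ℂ) ≤ kernelForm h u u c :=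
    (mul_le_mul_of_nonneg_right hα₀ (by positivity)).trans
      (hpd.integral_mul_sq_norm_sum_le hint u c)
  refine ⟨fun m u c => ?_, hle⟩
  change 0 ≤ kernelForm (fun g => h g - α₀) u u c
  rw [kernelForm_sub_const, sub_nonneg]
  exact hle m u c
end

section
/- Let G be a compact group with normalized Haar measure μ and let A ⊆ G be a symmetric subset (A = A⁻¹) containing the identity. Suppose h : G → ℝ is a continuous positive definite function with h(x) ≤ 0 for all x ∉ A and ∫ h dμ > 0. Then any finite set B ⊆ G with b⁻¹ b' ∈ Aᶜ ∪ {1} for all b, b' ∈ B satisfies |B| ≤ h(1) / ∫ h dμ. -/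
/-!
Put weight `1` on each point of `B` and weight `-|B|/k` on `k` further points drawn
independently from Haar measure. Positive definiteness makes the quadratic form of this
configuration nonnegative, and its expectation over the random points is
`∑_{b,b'} h(b⁻¹b') - |B|² ∫ h + |B|² (h 1 - ∫ h) / k`; letting `k → ∞` gives
`|B|² ∫ h ≤ ∑_{b,b'} h(b⁻¹b')`. The off-diagonal terms are `≤ 0` since `h ≤ 0` off `A`,
so the double sum is at most `|B| h 1`.
-/

open MeasureTheory
open scoped ComplexOrder

/-- Positive definiteness of a real-valued function on a group. -/
def IsPosDefReal {G : Type*} [Group G] (h : G → ℝ) : Prop :=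
  ∀ (m : ℕ) (u : Fin m → G) (c : Fin m → ℂ),
    0 ≤ ∑ i, ∑ j, (starRingEnd ℂ) (c i) * c j * (h ((u i)⁻¹ * u j) : ℂ)

def quadForm {G ι : Type*} [Group G] [Fintype ι] (h : G → ℝ) (u : ι → G) (c : ι → ℝ) : ℝ :=
  ∑ i, ∑ j, c i * c j * h ((u i)⁻¹ * u j)

namespace IsPosDefReal

variable {G : Type*} [Group G] {h : G → ℝ}

theorem quadForm_nonneg (hpd : IsPosDefReal h) {ι : Type*} [Fintype ι] (u : ι → G)
    (c : ι → ℝ) : 0 ≤ quadForm h u c := by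
  let e := Fintype.equivFin ι
  have hsum := hpd _ (u ∘ e.symm) (fun i => (c (e.symm i) : ℂ))
  have hcast : ∑ i, ∑ j, (starRingEnd ℂ) (c (e.symm i) : ℂ) * c (e.symm j)
      * (h (((u ∘ e.symm) i)⁻¹ * (u ∘ e.symm) j) : ℂ) = (quadForm h u c : ℂ) := by
    simp only [Function.comp_apply, Complex.conj_ofReal, quadForm, Complex.ofReal_sum,
      Complex.ofReal_mul]
    exact Fintype.sum_equiv e.symm _ _ fun i => Fintype.sum_equiv e.symm _ _ fun j => rfl
  rwa [hcast, Complex.zero_le_real] at hsum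

theorem apply_one_nonneg (hpd : IsPosDefReal h) : 0 ≤ h 1 := by
  simpa [quadForm] using hpd.quadForm_nonneg (fun _ : Unit => 1) 1

theorem apply_inv (hpd : IsPosDefReal h) (x : G) : h x⁻¹ = h x := by
  have him := (Complex.le_def.mp (hpd 2 ![1, x] ![1, Complex.I])).2
  simp [Fin.sum_univ_two, Complex.add_im, Complex.mul_im] at him
  linarith

end IsPosDefReal

section QuadForm

variable {G ι : Type*} [Group G] [Fintype ι] {h : G → ℝ}

theorem quadForm_option (u : ι → G) (c : ι → ℝ) (y : G) (s : ℝ) :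
    quadForm h (Option.elim' y u) (Option.elim' s c) =
      quadForm h u c + s * ∑ i, c i * (h ((u i)⁻¹ * y) + h (y⁻¹ * u i)) + s ^ 2 * h 1 := by
  simp only [quadForm, Fintype.sum_option, Option.elim'_none, Option.elim'_some, inv_mul_cancel,
    Finset.mul_sum, mul_add, Finset.sum_add_distrib]
  ring_nf

theorem continuous_quadForm_option [TopologicalSpace G] [IsTopologicalGroup G]
    (hcont : Continuous h) (u : ι → G) (c : ι → ℝ) (s : ℝ) :
    Continuous fun y => quadForm h (Option.elim' y u) (Option.elim' s c) := by
  simp_rw [quadForm_option]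
  fun_prop

theorem quadForm_le_sum_sq_mul (u : ι → G) {c : ι → ℝ} (hc : 0 ≤ c)
    (hoff : ∀ i j, i ≠ j → h ((u i)⁻¹ * u j) ≤ 0) :
    quadForm h u c ≤ (∑ i, c i ^ 2) * h 1 := by
  classical
  rw [Finset.sum_mul]
  refine Finset.sum_le_sum fun i _ => ?_
  rw [Fintype.sum_eq_add_sum_compl i, inv_mul_cancel, sq]
  have hrest : ∑ j ∈ {i}ᶜ, c i * c j * h ((u i)⁻¹ * u j) ≤ 0 :=
    Finset.sum_nonpos fun j hj => mul_nonpos_of_nonneg_of_nonpos (mul_nonneg (hc i) (hc j))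
      (hoff i j (Ne.symm (by simpa using hj)))
  linarith

end QuadForm

theorem Continuous.integrable_of_compactSpace {X E : Type*} [TopologicalSpace X]
    [CompactSpace X] [MeasurableSpace X] [OpensMeasurableSpace X] {μ : Measure X}
    [IsFiniteMeasure μ] [NormedAddCommGroup E] {f : X → E} (hf : Continuous f) :
    Integrable f μ :=
  hf.integrable_of_hasCompactSupport (HasCompactSupport.of_compactSpace f)

section Averaging

variable {G : Type*} [Group G] [TopologicalSpace G] [IsTopologicalGroup G] [MeasurableSpace G]
  [BorelSpace G] {μ : Measure G} [μ.IsMulLeftInvariant] {h : G → ℝ}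

theorem integral_apply_inv_mul_of_apply_inv (hinv : ∀ x, h x⁻¹ = h x) (g : G) :
    ∫ y, h (y⁻¹ * g) ∂μ = ∫ y, h y ∂μ := by
  simp_rw [← hinv (_⁻¹ * g), mul_inv_rev, inv_inv]
  exact integral_mul_left_eq_self h g⁻¹

variable [CompactSpace G] [IsProbabilityMeasure μ]

theorem integral_sum_mul_apply_add_apply (hcont : Continuous h) (hinv : ∀ x, h x⁻¹ = h x)
    {ι : Type*} [Fintype ι] (u : ι → G) (c : ι → ℝ) :
    ∫ y, ∑ i, c i * (h ((u i)⁻¹ * y) + h (y⁻¹ * u i)) ∂μ = 2 * (∑ i, c i) * ∫ y, h y ∂μ := by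
  have hint : ∀ f : G → ℝ, Continuous f → Integrable f μ := fun f hf =>
    hf.integrable_of_compactSpace
  rw [integral_finsetSum _ fun i _ => hint _ (by fun_prop), Finset.mul_sum, Finset.sum_mul]
  refine Finset.sum_congr rfl fun i _ => ?_
  rw [integral_const_mul, integral_add (hint _ (by fun_prop)) (hint _ (by fun_prop)),
    integral_mul_left_eq_self, integral_apply_inv_mul_of_apply_inv hinv]
  ring

theorem integral_quadForm_option (hcont : Continuous h) (hinv : ∀ x, h x⁻¹ = h x)
    {ι : Type*} [Fintype ι] (u : ι → G) (c : ι → ℝ) (s : ℝ) :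
    ∫ y, quadForm h (Option.elim' y u) (Option.elim' s c) ∂μ =
      quadForm h u c + 2 * s * (∑ i, c i) * ∫ y, h y ∂μ + s ^ 2 * h 1 := by
  have hint : ∀ f : G → ℝ, Continuous f → Integrable f μ := fun f hf =>
    hf.integrable_of_compactSpace
  simp_rw [quadForm_option]
  rw [integral_add (hint _ (by fun_prop)) (integrable_const _),
    integral_add (integrable_const _) (hint _ (by fun_prop)), integral_const_mul,
    integral_sum_mul_apply_add_apply hcont hinv]
  simp only [integral_const, probReal_univ, smul_eq_mul, one_mul]
  ring

/-- The right-hand side is the expectation of the quadratic form of `(u, c)` enlarged by `k`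
independent Haar-random points of weight `s` each. -/
theorem quadForm_add_averaged_nonneg (hpd : IsPosDefReal h) (hcont : Continuous h) (k : ℕ)
    {ι : Type*} [Fintype ι] (u : ι → G) (c : ι → ℝ) (s : ℝ) :
    0 ≤ quadForm h u c + 2 * s * k * (∑ i, c i) * ∫ y, h y ∂μ
      + s ^ 2 * (k * h 1 + k * (k - 1) * ∫ y, h y ∂μ) := by
  induction k generalizing ι with
  | zero => simpa using hpd.quadForm_nonneg u c
  | succ k ih =>
    have hint : Integrable (fun y => quadForm h (Option.elim' y u) (Option.elim' s c)) μ :=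
      (continuous_quadForm_option hcont u c s).integrable_of_compactSpace
    have hmean := integral_nonneg (μ := μ)
      (Pi.le_def.mpr fun y : G => ih (Option.elim' y u) (Option.elim' s c))
    simp_rw [add_assoc] at hmean
    rw [integral_add hint (integrable_const _), integral_quadForm_option hcont hpd.apply_inv]
      at hmean
    simp only [Fintype.sum_option, Option.elim'_none, Option.elim'_some, integral_const,
      probReal_univ, smul_eq_mul, one_mul] at hmean
    push_cast
    linarith

open Filter Topology in
theorem sq_sum_mul_integral_le_quadForm (hpd : IsPosDefReal h) (hcont : Continuous h)
    {ι : Type*} [Fintype ι] (u : ι → G) (c : ι → ℝ) :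
    (∑ i, c i) ^ 2 * ∫ y, h y ∂μ ≤ quadForm h u c := by
  set a := ∑ i, c i
  set I := ∫ y, h y ∂μ
  have hbound : ∀ k : ℕ, 1 ≤ k → a ^ 2 * I - a ^ 2 * (h 1 - I) / k ≤ quadForm h u c := by
    intro k hk
    have hk0 : (k : ℝ) ≠ 0 := by positivity
    have hmix : 2 * (-a / k) * k * a * I + (-a / k) ^ 2 * (k * h 1 + k * (k - 1) * I) =
        -(a ^ 2 * I - a ^ 2 * (h 1 - I) / k) := by
      field_simp
      ring
    have := quadForm_add_averaged_nonneg (μ := μ) hpd hcont k u c (-a / k)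
    linarith
  have hlim : Tendsto (fun k : ℕ => a ^ 2 * I - a ^ 2 * (h 1 - I) / k) atTop
      (𝓝 (a ^ 2 * I)) := by
    simpa using tendsto_const_nhds.sub (tendsto_const_div_atTop_nhds_zero_nat (a ^ 2 * (h 1 - I)))
  exact le_of_tendsto hlim (eventually_atTop.2 ⟨1, hbound⟩)

end Averaging

theorem noncomm_delsarte_general {G : Type*} [Group G] [TopologicalSpace G]
    [IsTopologicalGroup G] [CompactSpace G] [MeasurableSpace G] [BorelSpace G]
    (μ : Measure G) [μ.IsHaarMeasure] [IsProbabilityMeasure μ]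
    (A : Set G)
    (h : G → ℝ) (hcont : Continuous h) (hpd : IsPosDefReal h)
    (hneg : ∀ x ∉ A, h x ≤ 0) (hint : 0 < ∫ x, h x ∂μ)
    (B : Finset G) (hB : ∀ b ∈ B, ∀ b' ∈ B, b⁻¹ * b' ∈ Aᶜ ∪ {1}) :
    (B.card : ℝ) ≤ h 1 / ∫ x, h x ∂μ := by
  have hoff : ∀ b b' : B, b ≠ b' → h ((b : G)⁻¹ * b') ≤ 0 := by
    intro b b' hbb'
    rcases hB b b.2 b' b'.2 with hAc | h1
    · exact hneg _ hAc
    · exact absurd (Subtype.ext (inv_mul_eq_one.mp h1)) hbb'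
  have hlow := sq_sum_mul_integral_le_quadForm (μ := μ) hpd hcont ((↑) : B → G) 1
  have hup := quadForm_le_sum_sq_mul ((↑) : B → G) (c := 1) zero_le_one hoff
  simp only [Finset.univ_eq_attach, Pi.one_apply, Finset.sum_const, Finset.card_attach,
    nsmul_eq_mul, mul_one, one_pow] at hlow hup
  rw [le_div_iff₀ hint]
  rcases Nat.eq_zero_or_pos B.card with hn | hn
  · simpa [hn] using hpd.apply_one_nonneg
  · have hn' : (0 : ℝ) < B.card := by exact_mod_cast hn
    nlinarith

/-- Non-commutative Delsarte scheme for compact groups: let `G` be a compact group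
with normalized Haar measure `μ` and `A ⊆ G` a symmetric set containing `1`.
If `h : G → ℝ` is continuous, positive definite, `h ≤ 0` off `A`, and `∫ h dμ > 0`,
then any finite `B ⊆ G` with all quotients `b⁻¹ b'` in `Aᶜ ∪ {1}` satisfies
`|B| ≤ h(1) / ∫ h dμ`. -/
theorem noncomm_delsarte {G : Type*} [Group G] [TopologicalSpace G]
    [IsTopologicalGroup G] [CompactSpace G] [MeasurableSpace G] [BorelSpace G]
    (μ : Measure G) [μ.IsHaarMeasure] [IsProbabilityMeasure μ]
    (A : Set G) (hAsymm : A = A⁻¹) (hA1 : (1 : G) ∈ A)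
    (h : G → ℝ) (hcont : Continuous h) (hpd : IsPosDefReal h)
    (hneg : ∀ x ∉ A, h x ≤ 0) (hint : 0 < ∫ x, h x ∂μ)
    (B : Finset G) (hB : ∀ b ∈ B, ∀ b' ∈ B, b⁻¹ * b' ∈ Aᶜ ∪ {1}) :
    (B.card : ℝ) ≤ h 1 / ∫ x, h x ∂μ :=
  noncomm_delsarte_general μ A h hcont hpd hneg hint B hB
end

section
/- The function h₀ : U(d) → ℝ defined by h₀(Z) = ∑_{i,j=1}^d |z_{ij}|⁴ is positive definite on the unitary group U(d): for any unitary matrices U₁,...,U_m and complex numbers c₁,...,c_m, ∑_{r,t=1}^m h₀(U_r* U_t) conj(c_r) c_t ≥ 0. -/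
open scoped ComplexOrder

/-- `h₀(Z) = ∑_{i,j} |z_{ij}|⁴` on the unitary group `U(d)`. -/
noncomputable def h0 {d : ℕ} (Z : Matrix.unitaryGroup (Fin d) ℂ) : ℝ :=
  ∑ i, ∑ j, ‖(Z : Matrix (Fin d) (Fin d) ℂ) i j‖ ^ 4

/-!
Since `|⟪x, y⟫|² = ⟪x ⊗ x̄, y ⊗ ȳ⟫`, applying this twice gives `|⟪x, y⟫|⁴ = ⟪T x, T y⟫` with
`T x = (x ⊗ x̄) ⊗ conj (x ⊗ x̄)`. The entries of `U⋆V` are the inner products of the columns of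
`U` and `V`, so `h₀(U⋆V) = ⟪Φ U, Φ V⟫` where `Φ U` is the sum of `T` over the columns of `U`.
Hence `∑ c̄ᵣ cₜ h₀(Uᵣ⋆Uₜ) = ‖∑ cₜ Φ Uₜ‖² ≥ 0`.
-/

open Matrix

theorem sum_star_mul_mul_star_dotProduct_nonneg {ι κ R : Type*} [Fintype ι] [Fintype κ]
    [CommRing R] [StarRing R] [PartialOrder R] [StarOrderedRing R] (f : ι → κ → R) (c : ι → R) :
    0 ≤ ∑ r, ∑ t, star (c r) * c t * (star (f r) ⬝ᵥ f t) := by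
  have gram : ∑ r, ∑ t, star (c r) * c t * (star (f r) ⬝ᵥ f t)
      = star (∑ r, c r • f r) ⬝ᵥ ∑ t, c t • f t := by
    simp only [star_sum, star_smul, sum_dotProduct, dotProduct_sum, smul_dotProduct,
      dotProduct_smul, smul_eq_mul, Finset.mul_sum]
    rw [Finset.sum_comm]
    exact Finset.sum_congr rfl fun t _ => Finset.sum_congr rfl fun r _ => by ring
  exact gram ▸ dotProduct_star_self_nonneg _

section TensorConj

variable {𝕜 n : Type*} [RCLike 𝕜] [Fintype n]

def tensorConj (x : n → 𝕜) : n × n → 𝕜 := fun v => x v.1 * star (x v.2)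

theorem star_tensorConj_dotProduct (x y : n → 𝕜) :
    star (tensorConj x) ⬝ᵥ tensorConj y = ((‖star x ⬝ᵥ y‖ ^ 2 : ℝ) : 𝕜) := by
  rw [RCLike.ofReal_pow, ← RCLike.mul_conj, ← RCLike.star_def]
  simp only [dotProduct, Fintype.sum_prod_type, Finset.sum_mul_sum, tensorConj, Pi.star_apply,
    star_sum, star_mul', star_star]
  exact Finset.sum_congr rfl fun a _ => Finset.sum_congr rfl fun b _ => by ring

theorem star_tensorConj_tensorConj_dotProduct (x y : n → 𝕜) :
    star (tensorConj (tensorConj x)) ⬝ᵥ tensorConj (tensorConj y)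
      = ((‖star x ⬝ᵥ y‖ ^ 4 : ℝ) : 𝕜) := by
  rw [star_tensorConj_dotProduct, star_tensorConj_dotProduct, RCLike.norm_ofReal,
    abs_of_nonneg (by positivity), ← pow_mul]

def quarticFeature (U : Matrix n n 𝕜) : (n × n) × (n × n) → 𝕜 :=
  ∑ i, tensorConj (tensorConj (Uᵀ i))

theorem star_quarticFeature_dotProduct (U V : Matrix n n 𝕜) :
    star (quarticFeature U) ⬝ᵥ quarticFeature V = ∑ i, ∑ j, ((‖(Uᴴ * V) i j‖ ^ 4 : ℝ) : 𝕜) := by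
  simp only [quarticFeature, star_sum, sum_dotProduct, dotProduct_sum,
    star_tensorConj_tensorConj_dotProduct]
  exact Finset.sum_comm

end TensorConj

theorem ofReal_h0_inv_mul {d : ℕ} (U V : unitaryGroup (Fin d) ℂ) :
    (h0 (U⁻¹ * V) : ℂ) = star (quarticFeature (U : Matrix (Fin d) (Fin d) ℂ)) ⬝ᵥ quarticFeature V := by
  rw [star_quarticFeature_dotProduct, h0, UnitaryGroup.mul_val, UnitaryGroup.inv_val,
    star_eq_conjTranspose]
  push_cast
  rfl

/-- The function `h₀(Z) = ∑_{i,j} |z_{ij}|⁴` is positive definite on `U(d)`: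
for any unitaries `U₁,…,U_m` and complex numbers `c₁,…,c_m`,
`∑_{r,t} h₀(U_r* U_t) conj(c_r) c_t ≥ 0`. -/
theorem h0_posDef {d : ℕ} (m : ℕ) (U : Fin m → Matrix.unitaryGroup (Fin d) ℂ)
    (c : Fin m → ℂ) :
    0 ≤ ∑ r, ∑ t, (starRingEnd ℂ) (c r) * c t * (h0 ((U r)⁻¹ * U t) : ℂ) := by
  simp only [ofReal_h0_inv_mul, starRingEnd_apply]
  exact sum_star_mul_mul_star_dotProduct_nonneg
    (fun r => quarticFeature (U r : Matrix (Fin d) (Fin d) ℂ)) c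
end

section
/- For any unitary matrices U₁,...,U_m in U(d) and complex scalars c₁,...,c_m, the sum ∑_{r,t} h₀(U_r* U_t) conj(c_r) c_t equals the squared Hilbert–Schmidt norm ‖∑_t c_t Q_t‖²_{HS}, where Q_t = ∑_{j=1}^d P_{U_t e_j ⊗ U_t e_j} and h₀(Z) = ∑_{i,j} |z_{ij}|⁴. -/
/-!
Since every `Q_t` is a sum of self-adjoint rank-one operators, `tr (S S*)` expands to
`∑_{r,t} conj(c_r) c_t tr (Q_t Q_r)`. For rank-one projections `tr (P_v P_w) = |⟨v, w⟩|²`, and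
`⟨u ⊗ u, u' ⊗ u'⟩ = ⟨u, u'⟩²`, so `tr (Q_t Q_r) = ∑_{i,j} |⟨U_r e_i, U_t e_j⟩|⁴`; the inner
products `⟨U_r e_i, U_t e_j⟩` are exactly the entries of `U_r* U_t`.
-/

/-- The rank-one operator `P_w : x ↦ ⟨x, w⟩ w`. -/
noncomputable def rankOneProj {H : Type*} [NormedAddCommGroup H]
    [InnerProductSpace ℂ H] (w : H) : H →ₗ[ℂ] H :=
  ((innerSL ℂ w).smulRight w).toLinearMap

/-- `ℂ^d ⊗ ℂ^d`, modelled as `EuclideanSpace ℂ (Fin d × Fin d)`. -/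
noncomputable abbrev TensorSq (d : ℕ) := EuclideanSpace ℂ (Fin d × Fin d)

/-- The elementary tensor `v ⊗ v` of a vector `v ∈ ℂ^d`. -/
noncomputable def tensorSelf {d : ℕ} (v : EuclideanSpace ℂ (Fin d)) : TensorSq d :=
  WithLp.toLp 2 (fun p : Fin d × Fin d => v p.1 * v p.2)

/-- The `j`-th column of a matrix, i.e. the image `M e_j` of the `j`-th standard
basis vector, as a vector of `ℂ^d`. -/
def col {d : ℕ} (M : Matrix (Fin d) (Fin d) ℂ) (j : Fin d) :
    EuclideanSpace ℂ (Fin d) := WithLp.toLp 2 (fun i => M i j)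

open scoped ComplexConjugate InnerProductSpace Matrix
open Finset LinearMap InnerProductSpace

section TraceAdjoint

variable {𝕜 H ι : Type*} [RCLike 𝕜] [NormedAddCommGroup H] [InnerProductSpace 𝕜 H]
  [FiniteDimensional 𝕜 H] [Fintype ι]

lemma trace_sum_smul_comp_adjoint (c : ι → 𝕜) (A : ι → H →ₗ[𝕜] H) :
    trace 𝕜 H ((∑ t, c t • A t) ∘ₗ adjoint (∑ t, c t • A t)) =
      ∑ r, ∑ t, conj (c r) * c t * trace 𝕜 H (A t ∘ₗ adjoint (A r)) := by
  simp only [map_sum, map_smulₛₗ, ← Module.End.mul_eq_comp, sum_mul_sum, smul_mul_smul_comm,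
    RingHom.id_apply, smul_eq_mul]
  rw [sum_comm]
  exact sum_congr rfl fun r _ => sum_congr rfl fun t _ => by ring

end TraceAdjoint

section RankOneProj

variable {H : Type*} [NormedAddCommGroup H] [InnerProductSpace ℂ H]

lemma rankOneProj_eq_rankOne (w : H) : rankOneProj w = (rankOne ℂ w w).toLinearMap := rfl

variable [FiniteDimensional ℂ H]

lemma adjoint_rankOneProj (w : H) : adjoint (rankOneProj w) = rankOneProj w := by
  rw [rankOneProj_eq_rankOne, ContinuousLinearMap.adjoint_toLinearMap, adjoint_rankOne]

lemma trace_rankOneProj_comp (v w : H) :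
    trace ℂ H (rankOneProj v ∘ₗ rankOneProj w) = (‖⟪v, w⟫_ℂ‖ ^ 2 : ℝ) := by
  rw [rankOneProj_eq_rankOne, rankOneProj_eq_rankOne, ← ContinuousLinearMap.toLinearMap_comp,
    rankOne_comp_rankOne, ContinuousLinearMap.toLinearMap_smul, map_smul, trace_rankOne,
    smul_eq_mul, ← inner_conj_symm v w, RCLike.conj_mul, RCLike.norm_conj]
  norm_cast

end RankOneProj

section ColTensorProj

variable {d : ℕ}

lemma inner_tensorSelf (u v : EuclideanSpace ℂ (Fin d)) :
    ⟪tensorSelf u, tensorSelf v⟫_ℂ = ⟪u, v⟫_ℂ ^ 2 := by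
  simp only [tensorSelf, PiLp.inner_apply, RCLike.inner_apply, Fintype.sum_prod_type, sq,
    sum_mul_sum, map_mul]
  exact sum_congr rfl fun i _ => sum_congr rfl fun j _ => by ring

lemma conjTranspose_mul_apply_eq_inner_col (M N : Matrix (Fin d) (Fin d) ℂ) (i j : Fin d) :
    (Mᴴ * N) i j = ⟪col M i, col N j⟫_ℂ := by
  simp [Matrix.mul_apply, col, PiLp.inner_apply, mul_comm]

/-- The paper's `Q_t` is `colTensorProj U_t`. -/
noncomputable def colTensorProj (M : Matrix (Fin d) (Fin d) ℂ) : TensorSq d →ₗ[ℂ] TensorSq d :=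
  ∑ j, rankOneProj (tensorSelf (col M j))

lemma adjoint_colTensorProj (M : Matrix (Fin d) (Fin d) ℂ) :
    adjoint (colTensorProj M) = colTensorProj M := by
  simp only [colTensorProj, map_sum, adjoint_rankOneProj]

lemma trace_colTensorProj_comp (M N : Matrix (Fin d) (Fin d) ℂ) :
    trace ℂ (TensorSq d) (colTensorProj M ∘ₗ colTensorProj N) =
      (∑ i, ∑ j, ‖(Nᴴ * M) i j‖ ^ 4 : ℝ) := by
  rw [colTensorProj, colTensorProj, ← Module.End.mul_eq_comp, sum_mul_sum]
  simp only [map_sum, Module.End.mul_eq_comp, trace_rankOneProj_comp, inner_tensorSelf,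
    conjTranspose_mul_apply_eq_inner_col, norm_pow]
  push_cast
  rw [sum_comm]
  exact sum_congr rfl fun i _ => sum_congr rfl fun j _ => by rw [norm_inner_symm]; ring

lemma h0_inv_mul (U V : Matrix.unitaryGroup (Fin d) ℂ) :
    h0 (U⁻¹ * V) = ∑ i, ∑ j, ‖((U : Matrix (Fin d) (Fin d) ℂ)ᴴ * V) i j‖ ^ 4 := by
  rw [h0, ← Unitary.star_eq_inv]
  rfl

end ColTensorProj

/-- For unitaries `U₁,…,U_m` and scalars `c₁,…,c_m`, the sum
`∑_{r,t} h₀(U_r* U_t) conj(c_r) c_t` equals the squared Hilbert–Schmidt norm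
`‖∑_t c_t Q_t‖²_HS = tr (S S*)`, where `Q_t = ∑_j P_{U_t e_j ⊗ U_t e_j}` and
`S = ∑_t c_t Q_t`. -/
theorem sum_h0_eq_hs_norm_sq {d : ℕ} (m : ℕ)
    (U : Fin m → Matrix.unitaryGroup (Fin d) ℂ) (c : Fin m → ℂ)
    (Q : Fin m → (TensorSq d →ₗ[ℂ] TensorSq d))
    (hQ : ∀ t, Q t = ∑ j, rankOneProj (tensorSelf (col (U t : Matrix (Fin d) (Fin d) ℂ) j))) :
    (∑ r, ∑ t, (starRingEnd ℂ) (c r) * c t * (h0 ((U r)⁻¹ * U t) : ℂ)) =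
      LinearMap.trace ℂ (TensorSq d)
        ((∑ t, c t • Q t) ∘ₗ LinearMap.adjoint (∑ t, c t • Q t)) := by
  obtain rfl : Q = fun t => colTensorProj (U t) := funext hQ
  rw [trace_sum_smul_comp_adjoint]
  refine sum_congr rfl fun r _ => sum_congr rfl fun t _ => ?_
  rw [adjoint_colTensorProj, trace_colTensorProj_comp, h0_inv_mul]
end

section
/- The number of pairwise mutually unbiased orthonormal bases of ℂ^d is at most d + 1. -/
/-!
View the projector `x x*` of a unit vector `x ∈ ℂ^d` as a vector of `ℂ^(d × d)`, whose inner
product is the Hilbert–Schmidt one, so that `⟪x x*, y y*⟫ = |⟪x, y⟫|²`, and remove its component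
along the identity. For an orthonormal basis the resulting `d` vectors have Gram matrix
`I - J / d`, so any `d - 1` of them are linearly independent; for two mutually unbiased bases they
are orthogonal to each other. All of them are orthogonal to the identity, hence `m (d - 1) < d²`,
that is `m ≤ d + 1`.
-/

open scoped ComplexConjugate InnerProductSpace

section InnerProductSpace

variable {𝕜 E : Type*} [RCLike 𝕜] [NormedAddCommGroup E] [InnerProductSpace 𝕜 E]

theorem linearIndependent_of_inner_eq_ite_sub {ι : Type*} [Fintype ι] [DecidableEq ι]
    {w : ι → E} {c : 𝕜} (hw : ∀ i j, ⟪w i, w j⟫_𝕜 = (if i = j then 1 else 0) - c)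
    (hc : (Fintype.card ι : 𝕜) * c ≠ 1) : LinearIndependent 𝕜 w := by
  rw [Fintype.linearIndependent_iff]
  intro g hg
  set S := ∑ i, g i
  have hcoord : ∀ k, g k = c * S := by
    intro k
    have h := congrArg (fun v => ⟪w k, v⟫_𝕜) hg
    simp only [inner_sum, inner_smul_right, hw, inner_zero_right, mul_sub, mul_ite, mul_one,
      mul_zero, Finset.sum_sub_distrib, Finset.sum_ite_eq, Finset.mem_univ, if_true] at h
    rw [← Finset.sum_mul] at h
    linear_combination h
  have hS : S = 0 := by
    have h : S = Fintype.card ι * c * S := by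
      calc S = ∑ _i : ι, c * S := Finset.sum_congr rfl fun i _ => hcoord i
        _ = Fintype.card ι * c * S := by simp [mul_assoc]
    have h' : (1 - Fintype.card ι * c) * S = 0 := by linear_combination h
    exact (mul_eq_zero.mp h').resolve_left (sub_ne_zero.mpr hc.symm)
  intro k
  rw [hcoord, hS, mul_zero]

theorem linearIndependent_uncurry_of_inner_eq_zero {κ ι : Type*} [Fintype κ] [Fintype ι]
    {w : κ → ι → E} (hw : ∀ r, LinearIndependent 𝕜 (w r))
    (horth : ∀ r t, r ≠ t → ∀ i j, ⟪w r i, w t j⟫_𝕜 = 0) :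
    LinearIndependent 𝕜 (Function.uncurry w) := by
  classical
  rw [Fintype.linearIndependent_iff]
  intro g hg
  set y : κ → E := fun r => ∑ i, g (r, i) • w r i
  have hy : ∑ r, y r = 0 := by rw [← hg, Fintype.sum_prod_type]; rfl
  have hy_orth : ∀ r t, r ≠ t → ⟪y r, y t⟫_𝕜 = 0 := fun r t hrt => by
    simp [y, inner_sum, sum_inner, inner_smul_left, inner_smul_right, horth r t hrt]
  have hy_zero : ∀ r, y r = 0 := fun r => by
    rw [← inner_self_eq_zero (𝕜 := 𝕜)]
    calc ⟪y r, y r⟫_𝕜 = ⟪y r, ∑ t, y t⟫_𝕜 := by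
          rw [inner_sum (𝕜 := 𝕜) Finset.univ y (y r),
            Fintype.sum_eq_single r fun t htr => hy_orth r t (Ne.symm htr)]
      _ = 0 := by rw [hy, inner_zero_right]
  rintro ⟨r, i⟩
  exact Fintype.linearIndependent_iff.mp (hw r) (fun i => g (r, i)) (hy_zero r) i

theorem LinearIndependent.fintype_card_lt_finrank_of_inner_eq_zero [FiniteDimensional 𝕜 E]
    {ι : Type*} [Fintype ι] {w : ι → E} (hw : LinearIndependent 𝕜 w) {v : E} (hv : v ≠ 0)
    (horth : ∀ i, ⟪v, w i⟫_𝕜 = 0) : Fintype.card ι < Module.finrank 𝕜 E := by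
  have hspan : Submodule.span 𝕜 (Set.range w) ≤ (𝕜 ∙ v)ᗮ := by
    rw [Submodule.span_le]
    rintro _ ⟨i, rfl⟩
    exact Submodule.mem_orthogonal_singleton_iff_inner_right.mpr (horth i)
  have hdim := (𝕜 ∙ v).finrank_add_finrank_orthogonal
  rw [finrank_span_singleton hv] at hdim
  have := Submodule.finrank_mono hspan
  rw [finrank_span_eq_card hw] at this
  omega

end InnerProductSpace

section OuterVec

variable {𝕜 ι : Type*} [RCLike 𝕜] [Fintype ι]

noncomputable def outerVec (x : EuclideanSpace 𝕜 ι) : EuclideanSpace 𝕜 (ι × ι) :=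
  WithLp.toLp 2 fun p => x p.1 * conj (x p.2)

theorem inner_outerVec_outerVec (x y : EuclideanSpace 𝕜 ι) :
    ⟪outerVec x, outerVec y⟫_𝕜 = (‖⟪x, y⟫_𝕜‖ : 𝕜) ^ 2 := by
  rw [← RCLike.mul_conj]
  simp only [PiLp.inner_apply, RCLike.inner_apply, outerVec, map_sum, map_mul,
    RCLike.conj_conj, Fintype.sum_prod_type, Finset.sum_mul_sum]
  refine Finset.sum_congr rfl fun a _ => Finset.sum_congr rfl fun b _ => ?_
  ring

variable [DecidableEq ι]

variable (𝕜 ι) in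
def idVec : EuclideanSpace 𝕜 (ι × ι) :=
  WithLp.toLp 2 fun p => if p.1 = p.2 then 1 else 0

theorem inner_idVec_self : ⟪idVec 𝕜 ι, idVec 𝕜 ι⟫_𝕜 = Fintype.card ι := by
  simp only [PiLp.inner_apply, RCLike.inner_apply, idVec, Fintype.sum_prod_type]
  simp [apply_ite]

theorem inner_idVec_outerVec (x : EuclideanSpace 𝕜 ι) :
    ⟪idVec 𝕜 ι, outerVec x⟫_𝕜 = (‖x‖ : 𝕜) ^ 2 := by
  rw [← inner_self_eq_norm_sq_to_K]
  simp only [PiLp.inner_apply, idVec, outerVec, Fintype.sum_prod_type]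
  simp [RCLike.mul_conj]

noncomputable def tracelessOuterVec (x : EuclideanSpace 𝕜 ι) : EuclideanSpace 𝕜 (ι × ι) :=
  outerVec x - (Fintype.card ι : 𝕜)⁻¹ • idVec 𝕜 ι

theorem inner_idVec_tracelessOuterVec [Nonempty ι] {x : EuclideanSpace 𝕜 ι} (hx : ‖x‖ = 1) :
    ⟪idVec 𝕜 ι, tracelessOuterVec x⟫_𝕜 = 0 := by
  have hcard : (Fintype.card ι : 𝕜) ≠ 0 := Nat.cast_ne_zero.mpr Fintype.card_ne_zero
  simp only [tracelessOuterVec, inner_sub_right, inner_smul_right, inner_idVec_outerVec, hx,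
    inner_idVec_self]
  field_simp
  simp

theorem idVec_ne_zero [Nonempty ι] : idVec 𝕜 ι ≠ 0 := by
  rw [← inner_self_ne_zero (𝕜 := 𝕜), inner_idVec_self]
  exact Nat.cast_ne_zero.mpr Fintype.card_ne_zero

theorem inner_tracelessOuterVec [Nonempty ι] {x y : EuclideanSpace 𝕜 ι} (hx : ‖x‖ = 1)
    (hy : ‖y‖ = 1) :
    ⟪tracelessOuterVec x, tracelessOuterVec y⟫_𝕜 =
      (‖⟪x, y⟫_𝕜‖ : 𝕜) ^ 2 - (Fintype.card ι : 𝕜)⁻¹ := by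
  have hcard : (Fintype.card ι : 𝕜) ≠ 0 := Nat.cast_ne_zero.mpr Fintype.card_ne_zero
  have hxI : ⟪outerVec x, idVec 𝕜 ι⟫_𝕜 = 1 := by
    rw [← inner_conj_symm, inner_idVec_outerVec, hx]; simp
  simp only [tracelessOuterVec, inner_sub_left, inner_sub_right, inner_smul_left,
    inner_smul_right, inner_outerVec_outerVec, inner_idVec_outerVec, inner_idVec_self, hxI, hy,
    map_inv₀, map_natCast, RCLike.ofReal_one, one_pow]
  field_simp
  ring

theorem Orthonormal.inner_tracelessOuterVec [Nonempty ι] {κ : Type*} [DecidableEq κ]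
    {b : κ → EuclideanSpace 𝕜 ι} (hb : Orthonormal 𝕜 b) (i j : κ) :
    ⟪tracelessOuterVec (b i), tracelessOuterVec (b j)⟫_𝕜 =
      (if i = j then 1 else 0) - (Fintype.card ι : 𝕜)⁻¹ := by
  rw [_root_.inner_tracelessOuterVec (hb.1 i) (hb.1 j), orthonormal_iff_ite.mp hb i j]
  split_ifs <;> simp

theorem inner_tracelessOuterVec_eq_zero_of_unbiased [Nonempty ι] {x y : EuclideanSpace 𝕜 ι}
    (hx : ‖x‖ = 1) (hy : ‖y‖ = 1) (hxy : ‖⟪x, y⟫_𝕜‖ = 1 / √(Fintype.card ι)) :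
    ⟪tracelessOuterVec x, tracelessOuterVec y⟫_𝕜 = 0 := by
  rw [inner_tracelessOuterVec hx hy, hxy, ← RCLike.ofReal_pow, div_pow, one_pow,
    Real.sq_sqrt (Nat.cast_nonneg _)]
  simp

end OuterVec

/-- The number of pairwise mutually unbiased orthonormal bases of `ℂ^d` (`d ≥ 2`)
is at most `d + 1`: if `B₁,…,B_m` are orthonormal bases of `ℂ^d` such that for any
`r ≠ t` all the inner products between vectors of `B_r` and `B_t` have absolute
value `1/√d`, then `m ≤ d + 1`. -/
theorem mub_card_le (d : ℕ) (hd : 2 ≤ d) (m : ℕ)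
    (B : Fin m → OrthonormalBasis (Fin d) ℂ (EuclideanSpace ℂ (Fin d)))
    (hmub : ∀ r t, r ≠ t → ∀ j k,
      ‖(inner ℂ (B r j) (B t k) : ℂ)‖ = 1 / Real.sqrt d) :
    m ≤ d + 1 := by
  obtain ⟨n, rfl⟩ : ∃ n, d = n + 1 := ⟨d - 1, by omega⟩
  set W : Fin m → Fin n → EuclideanSpace ℂ (Fin (n + 1) × Fin (n + 1)) :=
    fun r j => tracelessOuterVec (B r j.castSucc)
  have hunit : ∀ r j, ‖B r j‖ = 1 := fun r => (B r).orthonormal.1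
  have hblock : ∀ r, LinearIndependent ℂ (W r) := fun r =>
    linearIndependent_of_inner_eq_ite_sub
      (((B r).orthonormal.comp _ (Fin.castSucc_injective n)).inner_tracelessOuterVec)
      (by
        rw [Fintype.card_fin, Fintype.card_fin, Nat.cast_succ, Ne,
          mul_inv_eq_one₀ n.cast_add_one_ne_zero]
        exact_mod_cast n.succ_ne_self.symm)
  have horth : ∀ r t, r ≠ t → ∀ i j, ⟪W r i, W t j⟫_ℂ = 0 := by
    intro r t hrt i j
    refine inner_tracelessOuterVec_eq_zero_of_unbiased (hunit _ _) (hunit _ _) ?_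
    simpa using hmub r t hrt _ _
  have hli := linearIndependent_uncurry_of_inner_eq_zero hblock horth
  have hcard := hli.fintype_card_lt_finrank_of_inner_eq_zero idVec_ne_zero
    fun _ => inner_idVec_tracelessOuterVec (hunit _ _)
  simp only [Fintype.card_prod, Fintype.card_fin, finrank_euclideanSpace] at hcard
  nlinarith
end

section
/- If U₁, ..., U_m are unitary matrices in U(d) such that every entry of U_r* U_t has absolute value 1/√d for all r ≠ t, then m ≤ d + 1. -/
/-!
The columns of `U₁, …, U_m` form `m` orthonormal bases of `ℂᵈ`. Subtracting `I/d` from the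
rank-one projections onto their vectors gives `md` traceless matrices `Q_{r,i}` with
`tr (Q_{r,i} Q_{t,j}) = δ_{rt} (δ_{ij} - 1/d)`: projections from different bases are
orthogonal precisely because the bases are unbiased. Pairing a linear relation
`∑ c_{r,i} Q_{r,i} = 0` with each `Q_{s,j}` shows that `c_{s,j}` depends only on `s`, so the
`Q_{r,i}` span a subspace of dimension at least `md - m` of the `(d² - 1)`-dimensional space
of traceless matrices. Hence `m (d - 1) ≤ d² - 1`.
-/

open Matrix Module LinearMap

section BlockGram

variable {R M ι κ : Type*} [CommRing R] [AddCommGroup M] [Module R M]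
  [Fintype ι] [Fintype κ] [DecidableEq ι] [DecidableEq κ]

theorem ker_linearCombination_le_range_funLeft_fst (B : M →ₗ[R] M →ₗ[R] R)
    (v : ι × κ → M) (α : R)
    (hB : ∀ p q, B (v p) (v q) = if p.1 = q.1 then (if p.2 = q.2 then 1 else 0) - α else 0) :
    ker (Fintype.linearCombination R v) ≤ range (funLeft R R (Prod.fst : ι × κ → ι)) := by
  intro c hc
  refine ⟨fun s => α * ∑ i, c (s, i), funext fun ⟨s, j⟩ => ?_⟩
  have hpair : B (v (s, j)) (∑ q, c q • v q) = 0 := by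
    rw [← Fintype.linearCombination_apply, mem_ker.mp hc, map_zero]
  simp only [Fintype.sum_prod_type, map_sum, map_smul, hB, smul_eq_mul, mul_ite, mul_sub, mul_one,
    mul_zero, Finset.sum_ite_irrel, Finset.sum_sub_distrib, Finset.sum_ite_eq, Finset.mem_univ,
    ↓reduceIte, ← Finset.sum_mul, Finset.sum_const_zero] at hpair
  rw [funLeft_apply]
  linear_combination -hpair

end BlockGram

theorem Matrix.finrank_ker_traceLinearMap_add_one {K n : Type*} [Field K] [Fintype n]
    [DecidableEq n] [Nonempty n] :
    finrank K (ker (traceLinearMap n K K)) + 1 = Fintype.card n * Fintype.card n := by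
  have htrace : traceLinearMap n K K ≠ 0 := fun h => by
    simpa [traceLinearMap_apply, trace_single_eq_same] using
      LinearMap.congr_fun h (single (Classical.arbitrary n) (Classical.arbitrary n) 1)
  rw [Module.Dual.finrank_ker_add_one_of_ne_zero htrace, finrank_matrix, finrank_self, mul_one]

section ColumnProjection

variable {n : Type*} [Fintype n]

def colProj (A : Matrix n n ℂ) (i : n) : Matrix n n ℂ :=
  vecMulVec (Aᵀ i) (star (Aᵀ i))

theorem star_col_dotProduct_col (A B : Matrix n n ℂ) (i j : n) :
    star (Aᵀ i) ⬝ᵥ Bᵀ j = (Aᴴ * B) i j := by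
  simp [dotProduct, mul_apply]

theorem trace_colProj (A : Matrix n n ℂ) (i : n) : trace (colProj A i) = (Aᴴ * A) i i := by
  rw [colProj, trace_vecMulVec, dotProduct_comm, star_col_dotProduct_col]

theorem trace_colProj_mul_colProj (A B : Matrix n n ℂ) (i j : n) :
    trace (colProj A i * colProj B j) = ‖(Aᴴ * B) i j‖ ^ 2 := by
  rw [colProj, colProj, vecMulVec_mul_vecMulVec, trace_vecMulVec, dotProduct_smul, smul_eq_mul,
    dotProduct_star, dotProduct_comm (Bᵀ j), star_col_dotProduct_col, RCLike.star_def,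
    Complex.mul_conj']

variable [DecidableEq n]

noncomputable def tracelessColProj (A : Matrix n n ℂ) (i : n) : Matrix n n ℂ :=
  colProj A i - (Fintype.card n : ℂ)⁻¹ • 1

variable {U V : Matrix n n ℂ}

theorem trace_tracelessColProj (hU : Uᴴ * U = 1) (i : n) : trace (tracelessColProj U i) = 0 := by
  have : (Fintype.card n : ℂ) ≠ 0 := Nat.cast_ne_zero.mpr (Fintype.card_pos_iff.mpr ⟨i⟩).ne'
  rw [tracelessColProj, trace_sub, trace_colProj, hU, trace_smul, Matrix.trace_one, smul_eq_mul,
    inv_mul_cancel₀ this, one_apply_eq, sub_self]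

theorem trace_tracelessColProj_mul (hU : Uᴴ * U = 1) (hV : Vᴴ * V = 1) (i j : n) :
    trace (tracelessColProj U i * tracelessColProj V j) =
      ‖(Uᴴ * V) i j‖ ^ 2 - (Fintype.card n : ℂ)⁻¹ := by
  have : (Fintype.card n : ℂ) ≠ 0 := Nat.cast_ne_zero.mpr (Fintype.card_pos_iff.mpr ⟨i⟩).ne'
  have hU1 := trace_colProj U i
  have hV1 := trace_colProj V j
  rw [hU, one_apply_eq] at hU1
  rw [hV, one_apply_eq] at hV1
  simp only [tracelessColProj, sub_mul, mul_sub, trace_sub, smul_mul, Matrix.mul_smul, one_mul,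
    mul_one, trace_smul, smul_eq_mul, trace_colProj_mul_colProj, hU1, hV1, Matrix.trace_one]
  field_simp
  ring

theorem trace_tracelessColProj_mul_of_unbiased {ι : Type*} [DecidableEq ι]
    {U : ι → Matrix n n ℂ}
    (hU : ∀ r, (U r)ᴴ * U r = 1)
    (hmub : ∀ r t, r ≠ t → ∀ i j, ‖((U r)ᴴ * U t) i j‖ = 1 / √(Fintype.card n))
    (r t : ι) (i j : n) :
    trace (tracelessColProj (U r) i * tracelessColProj (U t) j) =
      if r = t then (if i = j then 1 else 0) - (Fintype.card n : ℂ)⁻¹ else 0 := by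
  rw [trace_tracelessColProj_mul (hU r) (hU t)]
  by_cases hrt : r = t
  · subst hrt
    by_cases hij : i = j <;> simp [hU, one_apply, hij]
  · rw [hmub r t hrt i j, if_neg hrt, ← Complex.ofReal_pow, div_pow, one_pow,
      Real.sq_sqrt (Nat.cast_nonneg _)]
    push_cast
    ring

end ColumnProjection

/-- If `U₁,…,U_m` are unitary matrices in `U(d)` (`d ≥ 2`) such that every entry of
`U_r* U_t` has absolute value `1/√d` for all `r ≠ t`, then `m ≤ d + 1`. -/
theorem mub_matrix_card_le (d : ℕ) (hd : 2 ≤ d) (m : ℕ)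
    (U : Fin m → Matrix.unitaryGroup (Fin d) ℂ)
    (hmub : ∀ r t, r ≠ t → ∀ i j,
      ‖(star ((U r : Matrix (Fin d) (Fin d) ℂ)) *
        (U t : Matrix (Fin d) (Fin d) ℂ)) i j‖ = 1 / Real.sqrt d) :
    m ≤ d + 1 := by
  have hunit (r : Fin m) : (U r : Matrix (Fin d) (Fin d) ℂ)ᴴ * U r = 1 :=
    mem_unitaryGroup_iff'.mp (U r).2
  set Q : Fin m × Fin d → Matrix (Fin d) (Fin d) ℂ := fun p => tracelessColProj (U p.1) p.2
  set Ψ := Fintype.linearCombination ℂ Q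
  have hrange : finrank ℂ (range Ψ) + 1 ≤ d * d := by
    have hle : range Ψ ≤ ker (traceLinearMap (Fin d) ℂ ℂ) := by
      rintro _ ⟨c, rfl⟩
      simp [Ψ, Q, Fintype.linearCombination_apply, trace_tracelessColProj (hunit _)]
    have : NeZero d := ⟨by omega⟩
    have htraceless := Matrix.finrank_ker_traceLinearMap_add_one (K := ℂ) (n := Fin d)
    rw [Fintype.card_fin] at htraceless
    have hmono := Submodule.finrank_mono hle
    omega
  have hker : finrank ℂ (ker Ψ) ≤ m := by
    have hgram (p q : Fin m × Fin d) :
        (mul ℂ _).compr₂ (traceLinearMap (Fin d) ℂ ℂ) (Q p) (Q q) =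
        if p.1 = q.1 then (if p.2 = q.2 then 1 else 0) - (d : ℂ)⁻¹ else 0 := by
      simpa using trace_tracelessColProj_mul_of_unbiased hunit
        (by simpa [star_eq_conjTranspose] using hmub) p.1 q.1 p.2 q.2
    calc finrank ℂ (ker Ψ)
        ≤ finrank ℂ (range (funLeft ℂ ℂ (Prod.fst : Fin m × Fin d → Fin m))) :=
          Submodule.finrank_mono (ker_linearCombination_le_range_funLeft_fst _ Q _ hgram)
      _ ≤ m := (finrank_range_le _).trans (by simp)
  have hrank := Ψ.finrank_range_add_finrank_ker
  simp only [finrank_fintype_fun_eq_card, Fintype.card_prod, Fintype.card_fin] at hrank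
  nlinarith
end

section
/- Suppose h : U(6) → ℝ is a continuous positive definite function vanishing on scaled complex Hadamard matrices with h(I) = 5 and ∫ h dμ = 5/7, and suppose m : U(6) → ℝ is continuous, nonnegative, vanishes on scaled complex Hadamard matrices and at the identity, with ∫ m dμ > 0. If for some ε > 0 the function h + ε·m is positive definite, then the number of mutually unbiased bases in ℂ^6 is strictly less than 7. -/
open MeasureTheory
open scoped ComplexOrder

/-- `Z` is a scaled complex Hadamard matrix: all entries have modulus `1/√6`
(`Z` being unitary, it is then `(1/√6) H` with `H` complex Hadamard). -/
def IsScaledHadamard (Z : Matrix.unitaryGroup (Fin 6) ℂ) : Prop :=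
  ∀ i j, ‖(Z : Matrix (Fin 6) (Fin 6) ℂ) i j‖ = 1 / Real.sqrt 6

/-! A Delsarte-type bound. If `f` is positive definite on a group with a bi-invariant probability
measure `μ` and `U₁, …, Uₙ` are arbitrary, then positive definiteness on the `2n` points
`Uᵢ, x Uⱼ` gives `∑ᵢⱼ f (Uᵢ⁻¹ x Uⱼ) ≤ ∑ᵢⱼ f (Uᵢ⁻¹ Uⱼ)` for every `x`; integrating over `x` yields
`n² ∫ f dμ ≤ ∑ᵢⱼ f (Uᵢ⁻¹ Uⱼ)`. For `f = h + ε m` and mutually unbiased bases the right-hand side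
is `n f(1) = 5n`, while `∫ f dμ > 5/7`, so `n < 7`. -/

section Group

variable {G : Type*} [Group G] {n : ℕ}

def crossSum (f : G → ℝ) (U V : Fin n → G) : ℝ :=
  ∑ i, ∑ j, f ((U i)⁻¹ * V j)

lemma crossSum_mul_left (f : G → ℝ) (U V : Fin n → G) (x : G) :
    crossSum f (fun i => x * U i) (fun j => x * V j) = crossSum f U V := by
  simp only [crossSum, mul_inv_rev, mul_assoc, inv_mul_cancel_left]

lemma crossSum_self_eq_of_forall_ne {f : G → ℝ} {U : Fin n → G}
    (hU : ∀ i j, i ≠ j → f ((U i)⁻¹ * U j) = 0) : crossSum f U U = n * f 1 := by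
  have hrow (i : Fin n) : ∑ j, f ((U i)⁻¹ * U j) = f 1 := by
    rw [Finset.sum_eq_single_of_mem i (Finset.mem_univ i) fun j _ hj => hU i j hj.symm,
      inv_mul_cancel]
  simp [crossSum, hrow]

namespace IsPosDefReal

variable {f : G → ℝ}

lemma zero_le_blockForm (hf : IsPosDefReal f) (U V : Fin n → G) (a b : ℂ) :
    0 ≤ (starRingEnd ℂ a * a * crossSum f U U + starRingEnd ℂ a * b * crossSum f U V
      + starRingEnd ℂ b * a * crossSum f V U + starRingEnd ℂ b * b * crossSum f V V : ℂ) := by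
  convert hf (n + n) (Fin.append U V) (Fin.append (fun _ => a) (fun _ => b)) using 1
  simp only [crossSum, Fin.sum_univ_add, Fin.append_left, Fin.append_right,
    Finset.sum_add_distrib, ← Finset.mul_sum]
  push_cast
  ring

lemma crossSum_comm (hf : IsPosDefReal f) (U V : Fin n → G) :
    crossSum f U V = crossSum f V U := by
  have him := (Complex.le_def.mp (hf.zero_le_blockForm U V 1 Complex.I)).2
  simpa [eq_comm, ← sub_eq_add_neg, sub_eq_zero] using him

lemma two_mul_crossSum_le (hf : IsPosDefReal f) (U V : Fin n → G) :
    2 * crossSum f U V ≤ crossSum f U U + crossSum f V V := by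
  have hre : 0 ≤ crossSum f U U - crossSum f U V - crossSum f V U + crossSum f V V := by
    simpa [← sub_eq_add_neg] using (Complex.le_def.mp (hf.zero_le_blockForm U V 1 (-1))).1
  linarith [hf.crossSum_comm U V]

lemma crossSum_mul_left_le (hf : IsPosDefReal f) (U : Fin n → G) (x : G) :
    crossSum f U (fun j => x * U j) ≤ crossSum f U U := by
  have := hf.two_mul_crossSum_le U (fun j => x * U j)
  rw [crossSum_mul_left] at this
  linarith

end IsPosDefReal

end Group

section Measure

variable {G : Type*} [Group G] [MeasurableSpace G] [MeasurableMul G] {μ : Measure G}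
  [μ.IsMulLeftInvariant] [μ.IsMulRightInvariant] {n : ℕ} {f : G → ℝ}

lemma integrable_comp_mul_left_mul_right (hf : Integrable f μ) (g k : G) :
    Integrable (fun x => f (g * (x * k))) μ :=
  (hf.comp_mul_left g).comp_mul_right k

lemma integral_comp_mul_left_mul_right (g k : G) :
    ∫ x, f (g * (x * k)) ∂μ = ∫ x, f x ∂μ := by
  rw [integral_mul_right_eq_self (fun y => f (g * y)), integral_mul_left_eq_self]

lemma integrable_crossSum_mul_left (hf : Integrable f μ) (U : Fin n → G) :
    Integrable (fun x => crossSum f U (fun j => x * U j)) μ :=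
  integrable_finsetSum _ fun _ _ => integrable_finsetSum _ fun _ _ =>
    integrable_comp_mul_left_mul_right hf _ _

lemma integral_crossSum_mul_left (hf : Integrable f μ) (U : Fin n → G) :
    ∫ x, crossSum f U (fun j => x * U j) ∂μ = n ^ 2 * ∫ x, f x ∂μ := by
  simp only [crossSum]
  rw [integral_finsetSum _ fun _ _ => integrable_finsetSum _ fun _ _ =>
    integrable_comp_mul_left_mul_right hf _ _]
  simp_rw [integral_finsetSum _ fun _ _ => integrable_comp_mul_left_mul_right hf _ _,
    integral_comp_mul_left_mul_right]
  simp [sq, mul_assoc]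

lemma IsPosDefReal.sq_mul_integral_le [IsProbabilityMeasure μ] (hpd : IsPosDefReal f)
    (hf : Integrable f μ) (U : Fin n → G) : n ^ 2 * ∫ x, f x ∂μ ≤ crossSum f U U :=
  calc n ^ 2 * ∫ x, f x ∂μ = ∫ x, crossSum f U (fun j => x * U j) ∂μ :=
        (integral_crossSum_mul_left hf U).symm
    _ ≤ ∫ _, crossSum f U U ∂μ :=
        integral_mono (integrable_crossSum_mul_left hf U) (integrable_const _)
          (hpd.crossSum_mul_left_le U)
    _ = crossSum f U U := by simp

end Measure

lemma isMulRightInvariant_of_isHaarMeasure {G : Type*} [Group G] [TopologicalSpace G]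
    [IsTopologicalGroup G] [LocallyCompactSpace G] [MeasurableSpace G] [BorelSpace G]
    (μ : Measure G) [μ.IsHaarMeasure] [IsProbabilityMeasure μ] : μ.IsMulRightInvariant where
  map_mul_right_eq_self g := by
    have : IsProbabilityMeasure (μ.map (· * g)) :=
      Measure.isProbabilityMeasure_map (measurable_mul_const g).aemeasurable
    exact Measure.isHaarMeasure_eq_of_isProbabilityMeasure _ μ

theorem no_seven_mubs_of_witness_general
    [CompactSpace (Matrix.unitaryGroup (Fin 6) ℂ)]
    [MeasurableSpace (Matrix.unitaryGroup (Fin 6) ℂ)]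
    [BorelSpace (Matrix.unitaryGroup (Fin 6) ℂ)]
    (μ : Measure (Matrix.unitaryGroup (Fin 6) ℂ)) [μ.IsHaarMeasure]
    [IsProbabilityMeasure μ]
    (h : Matrix.unitaryGroup (Fin 6) ℂ → ℝ)
    (hcont : Continuous h)
    (hvan : ∀ Z, IsScaledHadamard Z → h Z = 0)
    (hI : h 1 = 5) (hint : ∫ Z, h Z ∂μ = 5 / 7)
    (m : Matrix.unitaryGroup (Fin 6) ℂ → ℝ)
    (mcont : Continuous m)
    (mvan : ∀ Z, IsScaledHadamard Z → m Z = 0) (mI : m 1 = 0)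
    (mint : 0 < ∫ Z, m Z ∂μ)
    (ε : ℝ) (hε : 0 < ε) (hpd' : IsPosDefReal (fun Z => h Z + ε * m Z)) :
    ∀ (n : ℕ) (U : Fin n → Matrix.unitaryGroup (Fin 6) ℂ),
      (∀ r t, r ≠ t → IsScaledHadamard ((U r)⁻¹ * U t)) → n < 7 := by
  intro n U hMUB
  have := isMulRightInvariant_of_isHaarMeasure μ
  have integrable {g : Matrix.unitaryGroup (Fin 6) ℂ → ℝ} (hg : Continuous g) : Integrable g μ :=
    hg.integrable_of_hasCompactSupport (HasCompactSupport.of_compactSpace g)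
  have hintegral : ∫ Z, h Z + ε * m Z ∂μ = 5 / 7 + ε * ∫ Z, m Z ∂μ := by
    rw [integral_add (integrable hcont) ((integrable mcont).const_mul ε), integral_const_mul, hint]
  have hdiag : crossSum (fun Z => h Z + ε * m Z) U U = n * 5 := by
    rw [crossSum_self_eq_of_forall_ne fun i j hij => by simp [hvan _ (hMUB i j hij),
      mvan _ (hMUB i j hij)], hI, mI, mul_zero, add_zero]
  have key := hpd'.sq_mul_integral_le (integrable (hcont.add (mcont.const_smul ε))) U
  rw [hintegral, hdiag] at key
  by_contra! hn
  have hn' : (7 : ℝ) ≤ n := by exact_mod_cast hn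
  nlinarith [mul_pos (pow_pos (by linarith : (0 : ℝ) < n) 2) (mul_pos hε mint)]

/-- Suppose `h : U(6) → ℝ` is continuous positive definite, vanishes on scaled
complex Hadamard matrices, `h(I) = 5`, `∫ h dμ = 5/7`; and `m : U(6) → ℝ` is
continuous, nonnegative, vanishes on scaled complex Hadamard matrices and at the
identity, with `∫ m dμ > 0`.  If for some `ε > 0` the function `h + ε m` is
positive definite, then the number of mutually unbiased bases in `ℂ^6` is
strictly less than `7`. -/
theorem no_seven_mubs_of_witness
    [IsTopologicalGroup (Matrix.unitaryGroup (Fin 6) ℂ)]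
    [CompactSpace (Matrix.unitaryGroup (Fin 6) ℂ)]
    [MeasurableSpace (Matrix.unitaryGroup (Fin 6) ℂ)]
    [BorelSpace (Matrix.unitaryGroup (Fin 6) ℂ)]
    (μ : Measure (Matrix.unitaryGroup (Fin 6) ℂ)) [μ.IsHaarMeasure]
    [IsProbabilityMeasure μ]
    (h : Matrix.unitaryGroup (Fin 6) ℂ → ℝ)
    (hcont : Continuous h) (hpd : IsPosDefReal h)
    (hvan : ∀ Z, IsScaledHadamard Z → h Z = 0)
    (hI : h 1 = 5) (hint : ∫ Z, h Z ∂μ = 5 / 7)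
    (m : Matrix.unitaryGroup (Fin 6) ℂ → ℝ)
    (mcont : Continuous m) (mnonneg : ∀ Z, 0 ≤ m Z)
    (mvan : ∀ Z, IsScaledHadamard Z → m Z = 0) (mI : m 1 = 0)
    (mint : 0 < ∫ Z, m Z ∂μ)
    (ε : ℝ) (hε : 0 < ε) (hpd' : IsPosDefReal (fun Z => h Z + ε * m Z)) :
    ∀ (n : ℕ) (U : Fin n → Matrix.unitaryGroup (Fin 6) ℂ),
      (∀ r t, r ≠ t → IsScaledHadamard ((U r)⁻¹ * U t)) → n < 7 :=
  no_seven_mubs_of_witness_general μ h hcont hvan hI hint m mcont mvan mI mint ε hε hpd'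
end
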